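/- arXiv:1702.06518 — 2 statements merged into one kernel-verified Lean document; each statement's English description precedes it below -/
import Mathlib

section
/- For real numbers $d_1, d_2$ with $d_1 d_2 < 0$, the integral $\int_{-\pi/2}^{\pi/2} |d_1 \cos^2\varphi + d_2 \sin^2\varphi|\, d\varphi$ equals $2\sqrt{-d_1 d_2} + 2|d_1 + d_2| \cdot \left|\arctan\sqrt{-d_1/d_2} - \frac{\pi}{4}\right|$. -/
/-!
On `[-π/2, π/2]` the form `f φ = d₁ cos² φ + d₂ sin² φ` (say `d₂ < 0 < d₁`) is positive exactly for
`|φ| < φ₀ = arctan √(-d₁/d₂)`, so `∫ |f| = 2 ∫_{-φ₀}^{φ₀} f - ∫_{-π/2}^{π/2} f`. Both integrals are read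
off the primitive `(d₁ + d₂) φ / 2 + (d₁ - d₂) sin φ cos φ / 2`; at `φ₀` one has
`(d₁ - d₂) sin φ₀ cos φ₀ = √(-d₁ d₂)`, and `d₁ + d₂` has the sign of `φ₀ - π/4`.
-/

open Real intervalIntegral

lemma integral_abs_eq_of_sign_pattern {f : ℝ → ℝ} (hf : Continuous f) {a c : ℝ}
    (hc : 0 ≤ c) (hca : c ≤ a) (hpos : ∀ x, |x| ≤ c → 0 ≤ f x)
    (hneg : ∀ x, c ≤ |x| → |x| ≤ a → f x ≤ 0) :
    ∫ x in (-a)..a, |f x| = 2 * (∫ x in (-c)..c, f x) - ∫ x in (-a)..a, f x := by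
  have hint : ∀ u v : ℝ, IntervalIntegrable f MeasureTheory.volume u v :=
    fun u v ↦ hf.intervalIntegrable u v
  have hint_abs : ∀ u v : ℝ, IntervalIntegrable (fun x ↦ |f x|) MeasureTheory.volume u v :=
    fun u v ↦ hf.abs.intervalIntegrable u v
  have hleft : ∫ x in (-a)..(-c), |f x| = -∫ x in (-a)..(-c), f x := by
    rw [← integral_neg]
    refine integral_congr fun x hx ↦ abs_of_nonpos (hneg x ?_ ?_) <;>
      rw [Set.uIcc_of_le (by linarith)] at hx <;> cases abs_cases x <;> linarith [hx.1, hx.2]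
  have hmid : ∫ x in (-c)..c, |f x| = ∫ x in (-c)..c, f x := by
    refine integral_congr fun x hx ↦ abs_of_nonneg (hpos x ?_)
    rw [Set.uIcc_of_le (by linarith)] at hx
    exact abs_le.2 hx
  have hright : ∫ x in c..a, |f x| = -∫ x in c..a, f x := by
    rw [← integral_neg]
    refine integral_congr fun x hx ↦ abs_of_nonpos (hneg x ?_ ?_) <;>
      rw [Set.uIcc_of_le hca] at hx <;> cases abs_cases x <;> linarith [hx.1, hx.2]
  have hsplit_abs : ∫ x in (-a)..a, |f x|
      = (∫ x in (-a)..(-c), |f x|) + (∫ x in (-c)..c, |f x|) + ∫ x in c..a, |f x| := by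
    rw [integral_add_adjacent_intervals (hint_abs _ _) (hint_abs _ _),
      integral_add_adjacent_intervals (hint_abs _ _) (hint_abs _ _)]
  have hsplit : ∫ x in (-a)..a, f x
      = (∫ x in (-a)..(-c), f x) + (∫ x in (-c)..c, f x) + ∫ x in c..a, f x := by
    rw [integral_add_adjacent_intervals (hint _ _) (hint _ _),
      integral_add_adjacent_intervals (hint _ _) (hint _ _)]
  rw [hsplit_abs, hsplit, hleft, hmid, hright]
  ring

lemma sin_sq_le_sin_sq_of_abs_le {x y : ℝ} (hxy : |x| ≤ |y|) (hy : |y| ≤ π / 2) :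
    sin x ^ 2 ≤ sin y ^ 2 := by
  have hsin_abs : ∀ z : ℝ, sin |z| ^ 2 = sin z ^ 2 := fun z ↦ by
    rcases abs_cases z with ⟨hz, _⟩ | ⟨hz, _⟩ <;> simp [hz]
  rw [← hsin_abs x, ← hsin_abs y]
  have hx0 : 0 ≤ sin |x| := sin_nonneg_of_nonneg_of_le_pi (abs_nonneg x) (by linarith [pi_pos])
  have hmono : sin |x| ≤ sin |y| :=
    sin_le_sin_of_le_of_le_pi_div_two (by linarith [abs_nonneg x, pi_pos]) hy hxy
  gcongr

section QuadraticForm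

variable (d1 d2 : ℝ)

noncomputable def quadPrimitive (φ : ℝ) : ℝ :=
  (d1 + d2) / 2 * φ + (d1 - d2) / 2 * (sin φ * cos φ)

lemma hasDerivAt_quadPrimitive (φ : ℝ) :
    HasDerivAt (quadPrimitive d1 d2) (d1 * cos φ ^ 2 + d2 * sin φ ^ 2) φ := by
  have h : HasDerivAt (quadPrimitive d1 d2)
      ((d1 + d2) / 2 * 1 + (d1 - d2) / 2 * (cos φ * cos φ + sin φ * -sin φ)) φ :=
    ((hasDerivAt_id φ).const_mul _).add (((hasDerivAt_sin φ).mul (hasDerivAt_cos φ)).const_mul _)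
  convert h using 1
  linear_combination (d1 + d2) / 2 * sin_sq_add_cos_sq φ

lemma integral_quadForm (u v : ℝ) :
    ∫ φ in u..v, (d1 * cos φ ^ 2 + d2 * sin φ ^ 2) = quadPrimitive d1 d2 v - quadPrimitive d1 d2 u :=
  integral_eq_sub_of_hasDerivAt (fun φ _ ↦ hasDerivAt_quadPrimitive d1 d2 φ)
    ((by fun_prop : Continuous fun φ ↦ d1 * cos φ ^ 2 + d2 * sin φ ^ 2).intervalIntegrable _ _)

lemma quadPrimitive_neg (φ : ℝ) : quadPrimitive d1 d2 (-φ) = -quadPrimitive d1 d2 φ := by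
  simp only [quadPrimitive, sin_neg, cos_neg]
  ring

lemma quadPrimitive_pi_div_two : quadPrimitive d1 d2 (π / 2) = (d1 + d2) * π / 4 := by
  simp only [quadPrimitive, sin_pi_div_two, cos_pi_div_two]
  ring

variable {d1 d2}

lemma quadForm_eq_of_eq_zero {φ₀ : ℝ} (hφ₀ : d1 * cos φ₀ ^ 2 + d2 * sin φ₀ ^ 2 = 0) (φ : ℝ) :
    d1 * cos φ ^ 2 + d2 * sin φ ^ 2 = (d1 - d2) * (sin φ₀ ^ 2 - sin φ ^ 2) := by
  linear_combination d1 * sin_sq_add_cos_sq φ - d1 * sin_sq_add_cos_sq φ₀ + hφ₀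

lemma integral_abs_quadForm_of_eq_zero (hd : d2 ≤ d1) {φ₀ : ℝ} (h0 : 0 ≤ φ₀) (hφ₀ : φ₀ ≤ π / 2)
    (hzero : d1 * cos φ₀ ^ 2 + d2 * sin φ₀ ^ 2 = 0) :
    ∫ φ in (-(π / 2))..(π / 2), |d1 * cos φ ^ 2 + d2 * sin φ ^ 2|
      = 2 * ((d1 - d2) * (sin φ₀ * cos φ₀)) + 2 * ((d1 + d2) * (φ₀ - π / 4)) := by
  have habs₀ : |φ₀| = φ₀ := abs_of_nonneg h0
  rw [integral_abs_eq_of_sign_pattern (by fun_prop) h0 hφ₀, integral_quadForm, integral_quadForm,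
    quadPrimitive_neg, quadPrimitive_neg, quadPrimitive_pi_div_two, quadPrimitive]
  · ring
  · intro φ hφ
    rw [quadForm_eq_of_eq_zero hzero]
    exact mul_nonneg (by linarith)
      (sub_nonneg.2 (sin_sq_le_sin_sq_of_abs_le (by rwa [habs₀]) (by rwa [habs₀])))
  · intro φ hφ hφ'
    rw [quadForm_eq_of_eq_zero hzero]
    exact mul_nonpos_of_nonneg_of_nonpos (by linarith)
      (sub_nonpos.2 (sin_sq_le_sin_sq_of_abs_le (by rwa [habs₀]) hφ'))

lemma quadForm_arctan_eq_zero {t : ℝ} (ht : d1 + d2 * t ^ 2 = 0) :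
    d1 * cos (arctan t) ^ 2 + d2 * sin (arctan t) ^ 2 = 0 := by
  rw [cos_sq_arctan, sin_sq_arctan]
  field_simp
  linarith

lemma sub_mul_sin_mul_cos_arctan {t : ℝ} (ht : d1 + d2 * t ^ 2 = 0) :
    (d1 - d2) * (sin (arctan t) * cos (arctan t)) = -(d2 * t) := by
  have hsqrt : √(1 + t ^ 2) * √(1 + t ^ 2) = 1 + t ^ 2 := mul_self_sqrt (by positivity)
  have hd1 : d1 - d2 = -d2 * (1 + t ^ 2) := by linear_combination ht
  rw [sin_arctan, cos_arctan, div_mul_div_comm, mul_one, hsqrt, hd1]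
  field_simp

lemma mul_arctan_sub_pi_div_four_nonneg (hd2 : d2 < 0) {t : ℝ} (ht0 : 0 ≤ t)
    (ht : d1 + d2 * t ^ 2 = 0) : 0 ≤ (d1 + d2) * (arctan t - π / 4) := by
  have hmono : 0 ≤ (arctan t - arctan 1) * (t - 1) :=
    (arctan_strictMono.monotone.monovary monotone_id).sub_mul_sub_nonneg 1 t
  have hprod : (d1 + d2) * (arctan t - π / 4) = -d2 * (t + 1) * ((arctan t - arctan 1) * (t - 1)) := by
    rw [arctan_one]
    linear_combination (arctan t - π / 4) * ht
  rw [hprod]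
  exact mul_nonneg (mul_nonneg (by linarith) (by linarith)) hmono

lemma integral_abs_quadForm_of_nonneg_of_neg (hd1 : 0 ≤ d1) (hd2 : d2 < 0) :
    ∫ φ in (-(π / 2))..(π / 2), |d1 * cos φ ^ 2 + d2 * sin φ ^ 2|
      = 2 * √(-(d1 * d2)) + 2 * |d1 + d2| * |arctan (√(-(d1 / d2))) - π / 4| := by
  have hratio : 0 ≤ -(d1 / d2) := neg_nonneg.2 (div_nonpos_of_nonneg_of_nonpos hd1 hd2.le)
  have hd2' : d2 ≠ 0 := hd2.ne
  set t := √(-(d1 / d2)) with ht_def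
  have ht : d1 + d2 * t ^ 2 = 0 := by
    rw [sq_sqrt hratio]
    field_simp
    ring
  have hsqrt : -(d2 * t) = √(-(d1 * d2)) := by
    rw [ht_def, neg_mul_eq_neg_mul, ← sqrt_sq (neg_nonneg.2 hd2.le), ← sqrt_mul (sq_nonneg _)]
    congr 1
    field_simp
  rw [integral_abs_quadForm_of_eq_zero (by linarith) (arctan_nonneg.2 (sqrt_nonneg _))
      (arctan_lt_pi_div_two t).le (quadForm_arctan_eq_zero ht), sub_mul_sin_mul_cos_arctan ht,
    hsqrt, mul_assoc 2 |d1 + d2|, ← abs_mul,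
    abs_of_nonneg (mul_arctan_sub_pi_div_four_nonneg hd2 (sqrt_nonneg _) ht)]

end QuadraticForm

theorem stmt_1 (d1 d2 : ℝ) (h : d1 * d2 < 0) :
    ∫ φ in (-(π/2))..(π/2), |d1 * Real.cos φ ^ 2 + d2 * Real.sin φ ^ 2|
      = 2 * Real.sqrt (-(d1 * d2)) +
        2 * |d1 + d2| * |Real.arctan (Real.sqrt (-(d1 / d2))) - π / 4| := by
  rcases mul_neg_iff.1 h with ⟨hd1, hd2⟩ | ⟨hd1, hd2⟩
  · exact integral_abs_quadForm_of_nonneg_of_neg hd1.le hd2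
  · have := integral_abs_quadForm_of_nonneg_of_neg (neg_nonneg.2 hd1.le) (neg_lt_zero.2 hd2)
    simpa only [neg_mul, ← neg_add, abs_neg, neg_neg, neg_div_neg_eq, mul_neg] using this
end

section
/- Let $B$ be a symmetric positive definite bilinear form on $\mathbb{R}^{n-1}$ with eigenvalues $d_1, \dots, d_{n-1}$, let $D = \mathrm{diag}(d_1,\dots,d_{n-1})$, and let $E$ be the $(n-1)\times k$ matrix whose columns are the first $k$ standard basis vectors. Then the average over the orthogonal group $O(n-1)$ (with normalized Haar measure) of $\det(E^t g^t D g E)$ equals $\binom{n-1}{k}^{-1} s_k(d_1, \dots, d_{n-1})$, where $s_k$ is the $k$-th elementary symmetric polynomial. -/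
/-!
Let `m = n - 1` and write `A` for the `m × k` matrix of the first `k` columns of `g`, so that
the minor in question is `det (Aᵀ D A)`. By the Cauchy–Binet formula,
`det (Aᵀ D A) = ∑_S (∏_{i ∈ S} dᵢ) det (A_S)²`, the sum running over the `k`-subsets `S` of
rows. Left multiplication by a permutation matrix permutes the rows of `g`, so by left
invariance of `μ` the average of `det (A_S)²` does not depend on `S`. Since the columns of `A`
are orthonormal, Cauchy–Binet for `D = 1` gives `∑_S det (A_S)² = 1`, hence each of these
averages is `(m choose k)⁻¹`.
-/

open Matrix MeasureTheory Finset

/-- The Borel σ-algebra on the orthogonal group `O(m)` (as a subspace of matrices). -/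
noncomputable instance orthogonalGroupMeasurableSpace (m : ℕ) :
    MeasurableSpace (Matrix.orthogonalGroup (Fin m) ℝ) := borel _

open Set.powersetCard Function

namespace Matrix

theorem det_mul_eq_sum_prod_mul_det_submatrix {R ι m : Type*} [CommRing R] [Fintype ι]
    [DecidableEq ι] [Fintype m] (B : Matrix ι m R) (C : Matrix m ι R) :
    (B * C).det = ∑ r : ι → m, (∏ a, B a (r a)) * (C.submatrix r id).det := by
  have hrows : (B * C).det
      = (detRowAlternating (R := R) (n := ι)).toMultilinearMap
          (fun a => ∑ i, B a i • (C i : ι → R)) := by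
    congr 1
    ext a b
    simp [mul_apply, Finset.sum_apply]
  rw [hrows, MultilinearMap.map_sum]
  refine Finset.sum_congr rfl fun r _ => ?_
  rw [MultilinearMap.map_smul_univ, smul_eq_mul]
  rfl

end Matrix

section CauchyBinet

variable {m : Type*} [Fintype m] [LinearOrder m] {k : ℕ}

theorem Fintype.sum_fun_eq_sum_powersetCard_sum_perm {M : Type*} [AddCommMonoid M]
    (F : (Fin k → m) → M) (hF : ∀ r, ¬ Injective r → F r = 0) :
    ∑ r, F r = ∑ s : Set.powersetCard m k, ∑ σ : Equiv.Perm (Fin k),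
      F (ofFinEmbEquiv.symm s ∘ σ) := by
  rw [← Fintype.sum_prod_type']
  -- `(s, σ) ↦ (increasing enumeration of s) ∘ σ` is a bijection onto the injective maps.
  refine (Fintype.sum_of_injective (fun p : Set.powersetCard m k × Equiv.Perm (Fin k) =>
    (ofFinEmbEquiv.symm p.1 ∘ p.2 : Fin k → m)) ?_ (fun p => F (ofFinEmbEquiv.symm p.1 ∘ p.2))
    F ?_ fun _ => rfl).symm
  · rintro ⟨s, σ⟩ ⟨t, τ⟩ h
    have hst : s = t := by
      have hrange := congrArg Set.range h
      simp only [Set.range_comp, EquivLike.range_eq_univ, Set.image_univ] at hrange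
      refine SetLike.ext fun i => ?_
      rw [← mem_range_ofFinEmbEquiv_symm_iff_mem, ← mem_range_ofFinEmbEquiv_symm_iff_mem]
      exact Set.ext_iff.mp hrange i
    subst hst
    simp only [Prod.mk.injEq, true_and]
    exact Equiv.ext fun a => (ofFinEmbEquiv.symm s).injective (congrFun h a)
  · intro r hr
    by_contra hFr
    have hinj : Injective r := by_contra fun h => hFr (hF r h)
    set e := ofFinEmbEquiv.symm (ofFinEmb k m ⟨r, hinj⟩)
    have hrange : Set.range r = Set.range e := by
      ext i
      rw [mem_range_ofFinEmbEquiv_symm_iff_mem, mem_ofFinEmb_iff_mem_range]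
      rfl
    let σ := (Equiv.ofInjective r hinj).trans ((Equiv.setCongr hrange).trans
      (Equiv.ofInjective e e.injective).symm)
    exact hr ⟨(ofFinEmb k m ⟨r, hinj⟩, σ),
      funext fun a => Equiv.apply_ofInjective_symm e.injective _⟩

namespace Matrix

variable {R : Type*} [CommRing R]

/-- The Cauchy–Binet formula. -/
theorem det_mul_eq_sum_det_submatrix_mul_det_submatrix (B : Matrix (Fin k) m R)
    (C : Matrix m (Fin k) R) :
    (B * C).det = ∑ s : Set.powersetCard m k,
      (B.submatrix id (ofFinEmbEquiv.symm s)).det *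
        (C.submatrix (ofFinEmbEquiv.symm s) id).det := by
  rw [det_mul_eq_sum_prod_mul_det_submatrix, Fintype.sum_fun_eq_sum_powersetCard_sum_perm]
  · refine Fintype.sum_congr _ _ fun s => ?_
    set e := ofFinEmbEquiv.symm s
    have hperm : ∀ σ : Equiv.Perm (Fin k), (C.submatrix (e ∘ σ) id).det
        = Equiv.Perm.sign σ * (C.submatrix e id).det := fun σ =>
      det_permute σ (C.submatrix e id)
    simp_rw [hperm, ← det_transpose (B.submatrix id e), det_apply', Finset.sum_mul]
    refine Fintype.sum_congr _ _ fun σ => ?_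
    simp only [transpose_apply, submatrix_apply, id, Function.comp_apply]
    ring
  · intro r hr
    obtain ⟨a, b, hab, hne⟩ := Function.not_injective_iff.mp hr
    rw [det_zero_of_row_eq hne (by ext; simp [hab]), mul_zero]

theorem det_transpose_mul_diagonal_mul (A : Matrix m (Fin k) R) (d : m → R) :
    (Aᵀ * diagonal d * A).det = ∑ s : Set.powersetCard m k,
      (∏ i ∈ (s : Finset m), d i) * (A.submatrix (ofFinEmbEquiv.symm s) id).det ^ 2 := by
  rw [det_mul_eq_sum_det_submatrix_mul_det_submatrix]
  refine Fintype.sum_congr _ _ fun s => ?_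
  set e := ofFinEmbEquiv.symm s
  have hprod : ∏ a, d (e a) = ∏ i ∈ (s : Finset m), d i := by
    rw [← Finset.map_orderEmbOfFin_univ s.val s.prop, Finset.prod_map]
    rfl
  have hsub : (Aᵀ * diagonal d).submatrix id e = (A.submatrix e id)ᵀ * diagonal (d ∘ e) := by
    ext a b
    simp [mul_apply, diagonal]
  rw [hsub, det_mul, det_transpose, det_diagonal, Function.comp_def, hprod]
  ring

theorem sum_sq_det_submatrix_eq_one {A : Matrix m (Fin k) R} (hA : Aᵀ * A = 1) :
    ∑ s : Set.powersetCard m k, (A.submatrix (ofFinEmbEquiv.symm s) id).det ^ 2 = 1 := by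
  simpa [hA] using (det_transpose_mul_diagonal_mul A (fun _ => (1 : R))).symm

end Matrix

end CauchyBinet

instance orthogonalGroupBorelSpace (m : ℕ) :
    BorelSpace (orthogonalGroup (Fin m) ℝ) := ⟨rfl⟩

section HaarAverage

variable {m k : ℕ} {c : Fin k → Fin m}

theorem orthogonalGroup_columns_orthonormal (g : orthogonalGroup (Fin m) ℝ)
    (hc : Injective c) : (g.1.submatrix id c)ᵀ * g.1.submatrix id c = 1 := by
  rw [transpose_submatrix, ← submatrix_mul _ _ _ _ _ bijective_id,
    (mem_orthogonalGroup_iff' _ _).mp g.2, submatrix_one _ hc]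

theorem sq_det_submatrix_le_one (g : orthogonalGroup (Fin m) ℝ) (hc : Injective c)
    (s : Set.powersetCard (Fin m) k) : (g.1.submatrix (ofFinEmbEquiv.symm s) c).det ^ 2 ≤ 1 := by
  rw [← sum_sq_det_submatrix_eq_one (orthogonalGroup_columns_orthonormal g hc)]
  exact Finset.single_le_sum
    (f := fun t => ((g.1.submatrix id c).submatrix (ofFinEmbEquiv.symm t) id).det ^ 2)
    (fun t _ => sq_nonneg _) (Finset.mem_univ s)

variable (μ : Measure (orthogonalGroup (Fin m) ℝ))

theorem integral_submatrix_perm_id [μ.IsMulLeftInvariant] (π : Equiv.Perm (Fin m))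
    (F : Matrix (Fin m) (Fin m) ℝ → ℝ) :
    ∫ g, F (g.1.submatrix π id) ∂μ = ∫ g, F g ∂μ := by
  let P : orthogonalGroup (Fin m) ℝ := ⟨π.permMatrix ℝ, by
    rw [mem_orthogonalGroup_iff', transpose_permMatrix, ← permMatrix_mul, mul_inv_cancel,
      permMatrix_one]⟩
  have hP : ∀ g : orthogonalGroup (Fin m) ℝ, (P * g).1 = g.1.submatrix π id :=
    fun g => PEquiv.toMatrix_toPEquiv_mul π _
  simp_rw [← hP]
  exact integral_mul_left_eq_self (fun g : orthogonalGroup (Fin m) ℝ => F g) P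

theorem integral_sq_det_submatrix_rows_eq [μ.IsMulLeftInvariant]
    (s t : Set.powersetCard (Fin m) k) :
    ∫ g, (g.1.submatrix (ofFinEmbEquiv.symm s) c).det ^ 2 ∂μ
      = ∫ g, (g.1.submatrix (ofFinEmbEquiv.symm t) c).det ^ 2 ∂μ := by
  obtain ⟨π, hπ⟩ := Equiv.Perm.exists_extending_pair _ _
    (ofFinEmbEquiv.symm t).injective (ofFinEmbEquiv.symm s).injective
  have hs : ⇑(ofFinEmbEquiv.symm s) = π ∘ ofFinEmbEquiv.symm t := funext fun a => (hπ a).symm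
  rw [hs]
  exact integral_submatrix_perm_id μ π fun M => (M.submatrix (ofFinEmbEquiv.symm t) c).det ^ 2

variable [IsProbabilityMeasure μ]

theorem integrable_sq_det_submatrix (hc : Injective c) (s : Set.powersetCard (Fin m) k) :
    Integrable (fun g : orthogonalGroup (Fin m) ℝ =>
      (g.1.submatrix (ofFinEmbEquiv.symm s) c).det ^ 2) μ := by
  have hcont : Continuous fun g : orthogonalGroup (Fin m) ℝ =>
      (g.1.submatrix (ofFinEmbEquiv.symm s) c).det ^ 2 :=
    ((continuous_subtype_val.matrix_submatrix _ _).matrix_det).pow 2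
  refine Integrable.of_bound hcont.aestronglyMeasurable 1 (Filter.Eventually.of_forall fun g => ?_)
  rw [Real.norm_of_nonneg (sq_nonneg _)]
  exact sq_det_submatrix_le_one g hc s

theorem integral_sq_det_submatrix [μ.IsMulLeftInvariant] (hc : Injective c)
    (s : Set.powersetCard (Fin m) k) :
    ∫ g, (g.1.submatrix (ofFinEmbEquiv.symm s) c).det ^ 2 ∂μ = (m.choose k : ℝ)⁻¹ := by
  have hsum : ∑ t : Set.powersetCard (Fin m) k, ∫ g,
      (g.1.submatrix (ofFinEmbEquiv.symm t) c).det ^ 2 ∂μ = 1 := by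
    rw [← integral_finsetSum _ fun t _ => integrable_sq_det_submatrix μ hc t]
    have hone : ∀ g : orthogonalGroup (Fin m) ℝ, ∑ t : Set.powersetCard (Fin m) k,
        (g.1.submatrix (ofFinEmbEquiv.symm t) c).det ^ 2 = 1 :=
      fun g => sum_sq_det_submatrix_eq_one (orthogonalGroup_columns_orthonormal g hc)
    simp [hone]
  have hcard : Fintype.card (Set.powersetCard (Fin m) k) = m.choose k := by
    rw [← Nat.card_eq_fintype_card, Set.powersetCard.card, Nat.card_fin]
  simp_rw [integral_sq_det_submatrix_rows_eq μ _ s, Finset.sum_const, Finset.card_univ, hcard,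
    nsmul_eq_mul] at hsum
  exact eq_inv_of_mul_eq_one_right hsum

theorem integral_det_submatrix_transpose_mul_diagonal_mul [μ.IsMulLeftInvariant]
    (hc : Injective c) (d : Fin m → ℝ) :
    ∫ g, ((g.1ᵀ * diagonal d * g).submatrix c c).det ∂μ
      = (m.choose k : ℝ)⁻¹ *
          ∑ s : Set.powersetCard (Fin m) k, ∏ i ∈ (s : Finset (Fin m)), d i := by
  have hexpand : ∀ g : orthogonalGroup (Fin m) ℝ, ((g.1ᵀ * diagonal d * g).submatrix c c).det
      = ∑ s : Set.powersetCard (Fin m) k, (∏ i ∈ (s : Finset (Fin m)), d i) *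
        (g.1.submatrix (ofFinEmbEquiv.symm s) c).det ^ 2 := by
    intro g
    rw [submatrix_mul _ _ _ id _ bijective_id, submatrix_mul _ _ _ id _ bijective_id,
      submatrix_id_id, ← transpose_submatrix, det_transpose_mul_diagonal_mul]
    rfl
  simp_rw [hexpand]
  rw [integral_finsetSum _ fun s _ => (integrable_sq_det_submatrix μ hc s).const_mul _]
  simp_rw [integral_const_mul, integral_sq_det_submatrix μ hc, Finset.mul_sum, mul_comm]

end HaarAverage

theorem stmt_4_general (n k : ℕ) (hk : k ≤ n - 1)
    (d : Fin (n - 1) → ℝ)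
    (μ : Measure (Matrix.orthogonalGroup (Fin (n - 1)) ℝ))
    [IsProbabilityMeasure μ]
    (hleft : ∀ h : Matrix.orthogonalGroup (Fin (n - 1)) ℝ,
      Measure.map (h * ·) μ = μ) :
    ∫ g : Matrix.orthogonalGroup (Fin (n - 1)) ℝ,
        (((g : Matrix (Fin (n - 1)) (Fin (n - 1)) ℝ)ᵀ * Matrix.diagonal d * g).submatrix
          (Fin.castLE hk) (Fin.castLE hk)).det ∂μ
      = (((n - 1).choose k : ℝ))⁻¹ *
          ∑ I ∈ Finset.powersetCard k (Finset.univ : Finset (Fin (n - 1))),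
            ∏ i ∈ I, d i := by
  have : μ.IsMulLeftInvariant := ⟨hleft⟩
  rw [integral_det_submatrix_transpose_mul_diagonal_mul μ (Fin.castLE_injective hk),
    Finset.sum_subtype (p := (· ∈ Set.powersetCard (Fin (n - 1)) k)) _
      fun I => by simp [Set.powersetCard.mem_iff]]

/-- Averaging over `O(n-1)` with the (bi-invariant) Haar probability measure `μ`,
the expected leading principal `k × k` minor of `gᵀ D g`, where `D = diag d` is the
matrix of a positive definite symmetric bilinear form on `ℝ^{n-1}` in an eigenbasis,
equals `(binom (n-1) k)⁻¹ · sₖ(d₁,…,d_{n-1})`. -/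
theorem stmt_4 (n k : ℕ) (hn : 1 ≤ n) (hk : k ≤ n - 1)
    (d : Fin (n - 1) → ℝ) (hd : ∀ i, 0 < d i)
    (μ : Measure (Matrix.orthogonalGroup (Fin (n - 1)) ℝ))
    [IsProbabilityMeasure μ]
    (hright : ∀ h : Matrix.orthogonalGroup (Fin (n - 1)) ℝ,
      Measure.map (· * h) μ = μ)
    (hleft : ∀ h : Matrix.orthogonalGroup (Fin (n - 1)) ℝ,
      Measure.map (h * ·) μ = μ) :
    ∫ g : Matrix.orthogonalGroup (Fin (n - 1)) ℝ,
        (((g : Matrix (Fin (n - 1)) (Fin (n - 1)) ℝ)ᵀ * Matrix.diagonal d * g).submatrix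
          (Fin.castLE hk) (Fin.castLE hk)).det ∂μ
      = (((n - 1).choose k : ℝ))⁻¹ *
          ∑ I ∈ Finset.powersetCard k (Finset.univ : Finset (Fin (n - 1))),
            ∏ i ∈ I, d i :=
  stmt_4_general n k hk d μ hleft
end
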